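/- For 0 < q < p ≤ 1, n ≥ 1, and x ∈ [0,1], the deviation of the second moment satisfies |B_{n,p,q}(t²; x) − x²| ≤ 2p^{n−1}/[n]_{p,q}; hence the sup-norm over [0,1] of B_{n,p,q}(t²;·) − (·)² is at most 2p^{n−1}/[n]_{p,q}. -/

import Mathlib

open Finset

noncomputable def pqInt (p q : ℝ) (m : ℕ) : ℝ := (p ^ m - q ^ m) / (p - q)

noncomputable def pqFact (p q : ℝ) (m : ℕ) : ℝ := ∏ j ∈ Finset.Icc 1 m, pqInt p q j

noncomputable def pqChoose (p q : ℝ) (n k : ℕ) : ℝ :=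
  pqFact p q n / (pqFact p q k * pqFact p q (n - k))

/-- The sample node `[k]_{p,q}/(p^{k-n}[n]_{p,q}) = p^{n-k}[k]_{p,q}/[n]_{p,q}`. -/
noncomputable def pqNode (p q : ℝ) (n k : ℕ) : ℝ :=
  p ^ (n - k) * pqInt p q k / pqInt p q n

/-- Basis function `b_{n,k}(x)` of the revised (p,q)-Bernstein operator. -/
noncomputable def pqBasis (p q : ℝ) (n k : ℕ) (x : ℝ) : ℝ :=
  (p ^ (n * (n - 1) / 2))⁻¹ * pqChoose p q n k * p ^ (k * (k - 1) / 2) * x ^ k *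
    ∏ s ∈ Finset.range (n - k), (p ^ s - q ^ s * x)

/-- The revised (p,q)-Bernstein operator. -/
noncomputable def pqBern (p q : ℝ) (n : ℕ) (f : ℝ → ℝ) (x : ℝ) : ℝ :=
  ∑ k ∈ Finset.range (n + 1), pqBasis p q n k x * f (pqNode p q n k)

/-!
After clearing the factor `p^{-n(n-1)/2}`, the identity `∑ₖ b_{n,k}(x) = 1` is a (p,q)-binomial
identity, proved by induction on `n` from the (p,q)-Pascal rule; the cross terms telescope.
The absorption rule `[k]_{p,q} [n choose k]_{p,q} = [n]_{p,q} [n-1 choose k-1]_{p,q}` turns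
`b_{n,k}(x) · p^{n-k}[k]_{p,q}` into `[n]_{p,q} x b_{n-1,k-1}(x)`. Together with
`[k]_{p,q} = p^{k-1} + q[k-1]_{p,q}` this gives
`B_{n,p,q}(t²; x) = (p^{n-1}x + q[n-1]_{p,q}x²)/[n]_{p,q}`,
and `[n]_{p,q} = p^{n-1} + q[n-1]_{p,q}` then yields
`B_{n,p,q}(t²; x) − x² = p^{n-1}/[n]_{p,q} · x(1 − x)`,
where `0 ≤ x(1 − x) ≤ 1` on `[0, 1]`.
-/

section pqInt

variable {p q : ℝ}

@[simp]
lemma pqInt_zero : pqInt p q 0 = 0 := by simp [pqInt]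

lemma pqInt_add (hpq : p ≠ q) (a b : ℕ) :
    pqInt p q (a + b) = p ^ a * pqInt p q b + q ^ b * pqInt p q a := by
  have : p - q ≠ 0 := sub_ne_zero.mpr hpq
  unfold pqInt
  field_simp
  ring

lemma pqInt_succ (hpq : p ≠ q) (m : ℕ) : pqInt p q (m + 1) = p ^ m + q * pqInt p q m := by
  have : p - q ≠ 0 := sub_ne_zero.mpr hpq
  rw [pqInt_add hpq m 1, pqInt, pqInt, pow_one, pow_one, div_self this]
  ring

lemma pqInt_pos (hq : 0 ≤ q) (hqp : q < p) {m : ℕ} (hm : m ≠ 0) : 0 < pqInt p q m :=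
  div_pos (sub_pos.mpr (pow_lt_pow_left₀ hqp hq hm)) (sub_pos.mpr hqp)

@[simp]
lemma pqFact_zero : pqFact p q 0 = 1 := by simp [pqFact]

lemma pqFact_succ (m : ℕ) : pqFact p q (m + 1) = pqFact p q m * pqInt p q (m + 1) :=
  prod_Icc_succ_top (Nat.le_add_left 1 m) _

lemma pqFact_pos (hq : 0 ≤ q) (hqp : q < p) (m : ℕ) : 0 < pqFact p q m :=
  prod_pos fun _ hj => pqInt_pos hq hqp (Nat.one_le_iff_ne_zero.mp (mem_Icc.mp hj).1)

lemma pqChoose_zero_right (hq : 0 ≤ q) (hqp : q < p) (n : ℕ) : pqChoose p q n 0 = 1 := by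
  simp [pqChoose, (pqFact_pos hq hqp n).ne']

lemma pqChoose_self (hq : 0 ≤ q) (hqp : q < p) (n : ℕ) : pqChoose p q n n = 1 := by
  simp [pqChoose, (pqFact_pos hq hqp n).ne']

lemma pqInt_mul_pqChoose (hq : 0 ≤ q) (hqp : q < p) (m j : ℕ) :
    pqInt p q (j + 1) * pqChoose p q (m + 1) (j + 1) = pqInt p q (m + 1) * pqChoose p q m j := by
  rw [pqChoose, pqChoose, pqFact_succ, pqFact_succ, Nat.add_sub_add_right]
  have := (pqFact_pos hq hqp j).ne'
  have := (pqFact_pos hq hqp (m - j)).ne'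
  have := (pqInt_pos hq hqp j.succ_ne_zero).ne'
  field_simp

lemma pqChoose_succ_succ (hq : 0 ≤ q) (hqp : q < p) {m j : ℕ} (hjm : j < m) :
    pqChoose p q (m + 1) (j + 1) =
      p ^ (j + 1) * pqChoose p q m (j + 1) + q ^ (m - j) * pqChoose p q m j := by
  obtain ⟨d, rfl⟩ := Nat.exists_eq_add_of_lt hjm
  have h₁ : j + d + 1 + 1 - (j + 1) = d + 1 := by omega
  have h₂ : j + d + 1 - (j + 1) = d := by omega
  have h₃ : j + d + 1 - j = d + 1 := by omega
  have h₄ : j + d + 1 + 1 = (j + 1) + (d + 1) := by omega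
  simp only [pqChoose, h₁, h₂, h₃, pqFact_succ (j + d + 1), pqFact_succ j, pqFact_succ d]
  rw [h₄, pqInt_add hqp.ne']
  have := (pqFact_pos hq hqp j).ne'
  have := (pqFact_pos hq hqp d).ne'
  have := (pqFact_pos hq hqp (j + d + 1)).ne'
  have := (pqInt_pos hq hqp j.succ_ne_zero).ne'
  have := (pqInt_pos hq hqp d.succ_ne_zero).ne'
  field_simp

end pqInt

section pqBasis

variable {p q : ℝ}

noncomputable def pqWeight (p q : ℝ) (n k : ℕ) (x : ℝ) : ℝ :=
  pqChoose p q n k * p ^ k.choose 2 * x ^ k * ∏ s ∈ range (n - k), (p ^ s - q ^ s * x)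

lemma pqBasis_eq_pqWeight (n k : ℕ) (x : ℝ) :
    pqBasis p q n k x = (p ^ n.choose 2)⁻¹ * pqWeight p q n k x := by
  rw [pqBasis, pqWeight, Nat.choose_two_right, Nat.choose_two_right]
  ring

lemma pow_choose_two_succ (k : ℕ) : p ^ (k + 1).choose 2 = p ^ k * p ^ k.choose 2 := by
  rw [Nat.choose_succ_succ', Nat.choose_one_right, pow_add]

noncomputable def pqWeightCarry (p q : ℝ) (m : ℕ) (x : ℝ) (k : ℕ) : ℝ :=
  q ^ (m - k) * p ^ k * x * pqWeight p q m k x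

section PascalStep

variable (hq : 0 ≤ q) (hqp : q < p) (m : ℕ) (x : ℝ)
include hq hqp

lemma pqWeight_succ_zero :
    pqWeight p q (m + 1) 0 x = p ^ m * pqWeight p q m 0 x - pqWeightCarry p q m x 0 := by
  simp only [pqWeightCarry, pqWeight, pqChoose_zero_right hq hqp, Nat.sub_zero, prod_range_succ]
  ring

lemma pqWeight_succ_succ {j : ℕ} (hj : j < m) :
    pqWeight p q (m + 1) (j + 1) x =
      p ^ m * pqWeight p q m (j + 1) x - pqWeightCarry p q m x (j + 1) +
        pqWeightCarry p q m x j := by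
  have hmj : m - j = m - (j + 1) + 1 := by omega
  have hpow : p ^ (j + 1) * p ^ (m - (j + 1)) = p ^ m := by rw [← pow_add]; congr 1; omega
  simp only [pqWeightCarry, pqWeight, pqChoose_succ_succ hq hqp hj, Nat.add_sub_add_right, hmj,
    prod_range_succ, pow_choose_two_succ j]
  rw [← hpow]
  ring

lemma pqWeight_succ_self : pqWeight p q (m + 1) (m + 1) x = pqWeightCarry p q m x m := by
  simp only [pqWeightCarry, pqWeight, pqChoose_self hq hqp, Nat.sub_self, range_zero, prod_empty,
    pow_choose_two_succ m]
  ring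

end PascalStep

lemma sum_pqWeight (hq : 0 ≤ q) (hqp : q < p) (x : ℝ) (n : ℕ) :
    ∑ k ∈ range (n + 1), pqWeight p q n k x = p ^ n.choose 2 := by
  induction n with
  | zero => simp [pqWeight, pqChoose_self hq hqp]
  | succ m ih =>
    have hsucc : ∑ j ∈ range m, pqWeight p q (m + 1) (j + 1) x =
        ∑ j ∈ range m, p ^ m * pqWeight p q m (j + 1) x +
          (pqWeightCarry p q m x 0 - pqWeightCarry p q m x m) := by
      rw [sum_congr rfl fun j hj => pqWeight_succ_succ hq hqp m x (mem_range.mp hj),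
        ← sum_range_sub' (pqWeightCarry p q m x) m, ← sum_add_distrib]
      exact sum_congr rfl fun j _ => by ring
    rw [sum_range_succ, sum_range_succ', hsucc, pqWeight_succ_zero hq hqp,
      pqWeight_succ_self hq hqp, pow_choose_two_succ m, ← ih, mul_sum, sum_range_succ' _ m]
    ring

lemma sum_pqBasis (hq : 0 ≤ q) (hqp : q < p) (x : ℝ) (n : ℕ) :
    ∑ k ∈ range (n + 1), pqBasis p q n k x = 1 := by
  simp only [pqBasis_eq_pqWeight, ← mul_sum, sum_pqWeight hq hqp]
  exact inv_mul_cancel₀ (pow_pos (hq.trans_lt hqp) _).ne'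

end pqBasis

section Moments

variable {p q : ℝ} (hq : 0 ≤ q) (hqp : q < p)
include hq hqp

lemma pqBasis_succ_mul {m i : ℕ} (hi : i ≤ m) (x : ℝ) :
    pqBasis p q (m + 1) (i + 1) x * (p ^ (m - i) * pqInt p q (i + 1)) =
      pqInt p q (m + 1) * x * pqBasis p q m i x := by
  have hp : p ≠ 0 := (hq.trans_lt hqp).ne'
  calc pqBasis p q (m + 1) (i + 1) x * (p ^ (m - i) * pqInt p q (i + 1))
      = (p ^ (m + 1).choose 2)⁻¹ * (pqInt p q (i + 1) * pqChoose p q (m + 1) (i + 1)) *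
          (p ^ i * p ^ (m - i)) * p ^ i.choose 2 * x ^ (i + 1) *
          ∏ s ∈ range (m - i), (p ^ s - q ^ s * x) := by
        rw [pqBasis_eq_pqWeight, pqWeight, pow_choose_two_succ i, Nat.add_sub_add_right]
        ring
    _ = pqInt p q (m + 1) * x * pqBasis p q m i x := by
        rw [pqInt_mul_pqChoose hq hqp, ← pow_add, Nat.add_sub_cancel' hi, pow_choose_two_succ m,
          pqBasis_eq_pqWeight, pqWeight]
        generalize ∏ s ∈ range (m - i), (p ^ s - q ^ s * x) = P
        field_simp
        ring

/-- The first moment: `pqBern p q n id = id` for `n ≠ 0`, with the factor `[n]_{p,q}` cleared. -/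
lemma sum_pqBasis_mul_pqInt (x : ℝ) (n : ℕ) :
    ∑ k ∈ range (n + 1), pqBasis p q n k x * (p ^ (n - k) * pqInt p q k) = pqInt p q n * x := by
  cases n with
  | zero => simp
  | succ m =>
    rw [sum_range_succ', pqInt_zero, mul_zero, mul_zero, add_zero,
      sum_congr rfl fun i hi => by
        rw [Nat.add_sub_add_right, pqBasis_succ_mul hq hqp (Nat.lt_succ_iff.mp (mem_range.mp hi))],
      ← mul_sum, sum_pqBasis hq hqp, mul_one]

lemma pqBern_sq (x : ℝ) (m : ℕ) :
    pqBern p q (m + 1) (fun t => t ^ 2) x =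
      (p ^ m * x + q * pqInt p q m * x ^ 2) / pqInt p q (m + 1) := by
  have hn : pqInt p q (m + 1) ≠ 0 := (pqInt_pos hq hqp m.succ_ne_zero).ne'
  have hterm : ∀ i ∈ range (m + 1),
      pqBasis p q (m + 1) (i + 1) x * pqNode p q (m + 1) (i + 1) ^ 2 =
        x / pqInt p q (m + 1) * (p ^ m * pqBasis p q m i x +
          q * (pqBasis p q m i x * (p ^ (m - i) * pqInt p q i))) := by
    intro i hi_mem
    have hi : i ≤ m := Nat.lt_succ_iff.mp (mem_range.mp hi_mem)
    have hnode : p ^ (m - i) * pqInt p q (i + 1) = p ^ m + q * (p ^ (m - i) * pqInt p q i) := by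
      rw [pqInt_succ hqp.ne', mul_add, ← pow_add, Nat.sub_add_cancel hi]
      ring
    calc pqBasis p q (m + 1) (i + 1) x * pqNode p q (m + 1) (i + 1) ^ 2
        = pqBasis p q (m + 1) (i + 1) x * (p ^ (m - i) * pqInt p q (i + 1)) *
            (p ^ (m - i) * pqInt p q (i + 1)) / pqInt p q (m + 1) ^ 2 := by
          rw [pqNode, Nat.add_sub_add_right]
          ring
      _ = _ := by
          rw [pqBasis_succ_mul hq hqp hi, hnode]
          field_simp
  rw [pqBern, sum_range_succ', sum_congr rfl hterm, ← mul_sum, sum_add_distrib, ← mul_sum,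
    ← mul_sum, sum_pqBasis hq hqp, sum_pqBasis_mul_pqInt hq hqp]
  simp only [pqNode, pqInt_zero, mul_zero, zero_div]
  field_simp
  ring

lemma pqBern_sq_sub_sq (x : ℝ) (m : ℕ) :
    pqBern p q (m + 1) (fun t => t ^ 2) x - x ^ 2 = p ^ m / pqInt p q (m + 1) * (x - x ^ 2) := by
  have hn : pqInt p q (m + 1) ≠ 0 := (pqInt_pos hq hqp m.succ_ne_zero).ne'
  rw [pqBern_sq hq hqp]
  field_simp
  rw [pqInt_succ hqp.ne']
  ring

end Moments

theorem pqBern_sq_deviation_general (p q : ℝ) (n : ℕ) (hn : 1 ≤ n)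
    (hq : 0 < q) (hqp : q < p) :
    (∀ x ∈ Set.Icc (0:ℝ) 1,
        |pqBern p q n (fun t => t ^ 2) x - x ^ 2| ≤ 2 * p ^ (n - 1) / pqInt p q n) ∧
      (⨆ x ∈ Set.Icc (0:ℝ) 1, |pqBern p q n (fun t => t ^ 2) x - x ^ 2|) ≤
        2 * p ^ (n - 1) / pqInt p q n := by
  obtain ⟨m, rfl⟩ := Nat.exists_eq_add_of_le' hn
  rw [Nat.add_sub_cancel, mul_div_assoc]
  have hcoef : 0 ≤ p ^ m / pqInt p q (m + 1) :=
    div_nonneg (pow_pos (hq.trans hqp) m).le (pqInt_pos hq.le hqp m.succ_ne_zero).le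
  have hbound : ∀ x ∈ Set.Icc (0:ℝ) 1,
      |pqBern p q (m + 1) (fun t => t ^ 2) x - x ^ 2| ≤ 2 * (p ^ m / pqInt p q (m + 1)) := by
    rintro x ⟨hx0, hx1⟩
    rw [pqBern_sq_sub_sq hq.le hqp, abs_of_nonneg (mul_nonneg hcoef (by nlinarith))]
    nlinarith
  have htwo : 0 ≤ 2 * (p ^ m / pqInt p q (m + 1)) := by positivity
  exact ⟨hbound, Real.iSup_le (fun x => Real.iSup_le (hbound x) htwo) htwo⟩

theorem pqBern_sq_deviation (p q : ℝ) (n : ℕ) (hn : 1 ≤ n)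
    (hq : 0 < q) (hqp : q < p) (hp : p ≤ 1) :
    (∀ x ∈ Set.Icc (0:ℝ) 1,
        |pqBern p q n (fun t => t ^ 2) x - x ^ 2| ≤ 2 * p ^ (n - 1) / pqInt p q n) ∧
      (⨆ x ∈ Set.Icc (0:ℝ) 1, |pqBern p q n (fun t => t ^ 2) x - x ^ 2|) ≤
        2 * p ^ (n - 1) / pqInt p q n :=
  pqBern_sq_deviation_general p q n hn hq hqp
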